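/- Let G be a simple graph and η = (v₁,…,v_r) ∈ P(G) a nonempty sequence. If r ≥ 2, then the three-letter word (η, (v₁), η⁻¹) does not lie in D(P(G)); if r = 1 and v₁ has a neighbour w in G, then the three-letter word (η, (w), η⁻¹) does not lie in D(P(G)). Consequently, if G has no isolated vertices, then the only element η ∈ P(G) such that (η, μ, η⁻¹) ∈ D(P(G)) for every μ ∈ P(G) is the empty sequence. -/

import Mathlib

set_option linter.unusedSectionVars false

open Monoid

namespace PaperPG

/-! ### Generic notions: letters, reduced / cyclically reduced words, reduced forms -/

section Letters

variable {ι : Type*} (H : ι → Type*) [∀ i, Group (H i)]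

/-- A letter: a vertex/index together with an element of the corresponding group. -/
abbrev Ltr : Type _ := (i : ι) × H i

/-- A (combinatorially) reduced word: all letters are non-identity and adjacent letters
belong to distinct factors. -/
def IsRed (l : List (Ltr H)) : Prop :=
  (∀ x ∈ l, x.2 ≠ 1) ∧ l.Chain' fun a b => a.1 ≠ b.1

/-- A cyclically reduced word: reduced, and if it has length at least `2`, its first and last
letters belong to distinct factors. -/
def IsCycRed (l : List (Ltr H)) : Prop :=
  IsRed H l ∧ ∀ a ∈ l.head?, ∀ b ∈ l.getLast?, 2 ≤ l.length → a.1 ≠ b.1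

theorem isRed_nil : IsRed H ([] : List (Ltr H)) := by
  exact ⟨by simp, List.isChain_nil⟩

theorem isCycRed_nil : IsCycRed H ([] : List (Ltr H)) := by
  refine ⟨isRed_nil H, ?_⟩
  simp

theorem isCycRed_single (x : Ltr H) (hx : x.2 ≠ 1) : IsCycRed H [x] := by
  refine ⟨⟨by simpa using hx, List.isChain_singleton _⟩, ?_⟩
  simp

variable [DecidableEq ι] [∀ i, DecidableEq (H i)]

/-- The element of the free product `∗_{i} H i` determined by a word. -/
noncomputable def listProd (l : List (Ltr H)) : CoprodI H :=
  (l.map fun x => CoprodI.of x.2).prod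

/-- The reduced form of a word: the unique reduced word representing the product of its
letters in the free product `∗_i H i`. -/
noncomputable def red (l : List (Ltr H)) : List (Ltr H) :=
  (CoprodI.Word.equiv (listProd H l)).toList

/-- The set of indices (vertices) occurring in a word. -/
def verts (l : List (Ltr H)) : Set ι := {i | ∃ x ∈ l, x.1 = i}

/-- The formal inverse of a word: invert every letter and reverse. -/
def rawInv (l : List (Ltr H)) : List (Ltr H) :=
  (l.map fun x => (⟨x.1, x.2⁻¹⟩ : Ltr H)).reverse

end Letters

/-! ### Homomorphisms of (the underlying data of) partial groups -/

/-- `f` is a homomorphism of partial groups, from the partial group with domain `D₁` and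
product `P₁` to the one with domain `D₂` and product `P₂`. -/
def IsHom {M N : Type*} (D₁ : Set (List M)) (P₁ : List M → M)
    (D₂ : Set (List N)) (P₂ : List N → N) (f : M → N) : Prop :=
  (∀ u ∈ D₁, u.map f ∈ D₂) ∧ ∀ u ∈ D₁, P₂ (u.map f) = f (P₁ u)

theorem isHom_id {M : Type*} (D : Set (List M)) (P : List M → M) : IsHom D P D P id := by
  constructor <;> intro u hu <;> simp [hu]

theorem IsHom.comp {M₁ M₂ M₃ : Type*} {D₁ : Set (List M₁)} {P₁ : List M₁ → M₁}
    {D₂ : Set (List M₂)} {P₂ : List M₂ → M₂} {D₃ : Set (List M₃)} {P₃ : List M₃ → M₃}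
    {g : M₂ → M₃} {f : M₁ → M₂} (hg : IsHom D₂ P₂ D₃ P₃ g) (hf : IsHom D₁ P₁ D₂ P₂ f) :
    IsHom D₁ P₁ D₃ P₃ (g ∘ f) := by
  refine ⟨fun u hu => ?_, fun u hu => ?_⟩
  · rw [← List.map_map]
    exact hg.1 _ (hf.1 u hu)
  · rw [← List.map_map, hg.2 _ (hf.1 u hu), hf.2 u hu]
    rfl

/-! ### The partial group `M(G, H)` associated to a decorated graph -/

section Graph

variable {ι : Type*} (H : ι → Type*) [∀ i, Group (H i)]
  [DecidableEq ι] [∀ i, DecidableEq (H i)] (G : SimpleGraph ι)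

/-- Membership in `M(G,H)`: a cyclically reduced word whose set of vertices is a clique. -/
def Mem (l : List (Ltr H)) : Prop := IsCycRed H l ∧ G.IsClique (verts H l)

theorem mem_nil : Mem H G [] := by
  refine ⟨isCycRed_nil H, ?_⟩
  simp [verts, SimpleGraph.isClique_iff, Set.Pairwise]

theorem mem_single (v : ι) (h : H v) (hne : h ≠ 1) : Mem H G [⟨v, h⟩] := by
  refine ⟨isCycRed_single H _ hne, ?_⟩
  simp only [verts, SimpleGraph.isClique_iff, Set.Pairwise, List.mem_singleton]
  rintro a ⟨x, hx, rfl⟩ b ⟨y, hy, rfl⟩ hne'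
  subst hx; subst hy
  exact absurd rfl hne'

/-- A word with letters elements of `M(G,H)` is in the domain `D(G,H)` iff all its letters are
elements of `M(G,H)`, all occurring vertices lie in a common clique, and the reduced form of
any subproduct `u_i ⋯ u_j` is cyclically reduced. -/
def InD (W : List (List (Ltr H))) : Prop :=
  (∀ u ∈ W, Mem H G u) ∧
  G.IsClique {i | ∃ u ∈ W, i ∈ verts H u} ∧
  ∀ i j : ℕ, i ≤ j → j < W.length →
    IsCycRed H (red H (((W.drop i).take (j + 1 - i)).flatten))

/-- The underlying set of the partial group `M(G,H)`. -/
def Carrier : Type _ := {l : List (Ltr H) // Mem H G l}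

/-- The domain of the partial group `M(G,H)`. -/
def pgD : Set (List (Carrier H G)) := {W | InD H G (W.map Subtype.val)}

/-- The unit of the partial group `M(G,H)`: the empty word. -/
def one : Carrier H G := ⟨[], mem_nil H G⟩

/-- The product map of the partial group `M(G,H)`: the reduced form of the concatenation
(junk value `1` outside of the domain). -/
noncomputable def pgPi (W : List (Carrier H G)) : Carrier H G := by
  classical exact if h : Mem H G (red H (W.map Subtype.val).flatten) then ⟨_, h⟩ else one H G

/-- The inversion of the partial group `M(G,H)` (junk value `1` if the result were not a
member, which never happens). -/
noncomputable def invCar (x : Carrier H G) : Carrier H G := by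
  classical exact if h : Mem H G (rawInv H x.val) then ⟨_, h⟩ else one H G

/-- The subset `H̃ᵥ` of `M(G,H)`: the empty word together with the one-letter words with
letter a nontrivial element of `H v`. -/
def Htilde (v : ι) : Set (Carrier H G) :=
  {x | x.val = [] ∨ ∃ h : H v, h ≠ 1 ∧ x.val = [⟨v, h⟩]}

end Graph

/-! ### Induced maps -/

section Induced

variable {ι ι' : Type*} (H : ι → Type*) [∀ i, Group (H i)]
  [DecidableEq ι] [∀ i, DecidableEq (H i)] (G : SimpleGraph ι)
  (H' : ι' → Type*) [∀ i, Group (H' i)]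
  [DecidableEq ι'] [∀ i, DecidableEq (H' i)] (G' : SimpleGraph ι')

/-- The letterwise map on words induced by a map of vertices `fG` and group homomorphisms
`fH v : H v →* H' (fG v)`. -/
def rawInduced (fG : ι → ι') (fH : ∀ i, H i →* H' (fG i)) (l : List (Ltr H)) :
    List (Ltr H') :=
  l.map fun x => ⟨fG x.1, fH x.1 x.2⟩

/-- The map `M(f_G, {f_v}) : M(G,H) → M(G',H')` (junk value `1` if the image word were not a
member; this never happens when the `fH v` are injective). -/
noncomputable def inducedCar (fG : ι → ι') (fH : ∀ i, H i →* H' (fG i))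
    (x : Carrier H G) : Carrier H' G' := by
  classical exact if h : Mem H' G' (rawInduced H H' fG fH x.val) then ⟨_, h⟩ else one H' G'

/-- A homomorphism of partial groups `M(G,H) → M(G',H')` has torsion-free kernel if the only
element of finite order (as an element of the ambient free product) sent to `1` is `1`. -/
def TFKer (f : Carrier H G → Carrier H' G') : Prop :=
  ∀ x : Carrier H G, f x = one H' G' → IsOfFinOrder (listProd H x.val) → x = one H G

end Induced

/-! ### Automorphism groups -/

section Aut

variable {ι : Type*} (H : ι → Type*) [∀ i, Group (H i)]
  [DecidableEq ι] [∀ i, DecidableEq (H i)] (G : SimpleGraph ι)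

/-- The automorphism group of the partial group `M(G,H)`, as a subgroup of the permutation
group of its carrier: bijections that are homomorphisms in both directions. -/
noncomputable def pgAut : Subgroup (Equiv.Perm (Carrier H G)) where
  carrier := {f | IsHom (pgD H G) (pgPi H G) (pgD H G) (pgPi H G) f ∧
    IsHom (pgD H G) (pgPi H G) (pgD H G) (pgPi H G) f.symm}
  one_mem' := ⟨isHom_id _ _, isHom_id _ _⟩
  mul_mem' := by
    rintro f g ⟨hf, hf'⟩ ⟨hg, hg'⟩
    exact ⟨hf.comp hg, hg'.comp hf'⟩
  inv_mem' := by
    rintro f ⟨hf, hf'⟩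
    exact ⟨hf', hf⟩

/-- The automorphism group of a simple graph, as a subgroup of the permutation group of its
vertices: bijections such that both the map and its inverse send edges to edges. -/
def graphAut : Subgroup (Equiv.Perm ι) where
  carrier := {σ | (∀ a b, G.Adj a b → G.Adj (σ a) (σ b)) ∧
    (∀ a b, G.Adj a b → G.Adj (σ.symm a) (σ.symm b))}
  one_mem' := ⟨fun a b h => h, fun a b h => h⟩
  mul_mem' := by
    rintro f g ⟨hf, hf'⟩ ⟨hg, hg'⟩
    exact ⟨fun a b h => hf _ _ (hg _ _ h), fun a b h => hg' _ _ (hf' _ _ h)⟩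
  inv_mem' := by
    rintro f ⟨hf, hf'⟩
    exact ⟨hf', hf⟩

/-- An automorphism `f` of `M(G,H)` covers the vertex map `σ` if for every vertex `v`,
`f` sends the nontrivial elements of `H̃ᵥ` into `H̃_{σ v}`. -/
def CoversVia (f : Carrier H G → Carrier H G) (σ : ι → ι) : Prop :=
  ∀ (v : ι) (h : H v) (hne : h ≠ 1),
    ∃ h' : H (σ v), h' ≠ 1 ∧ (f ⟨[⟨v, h⟩], mem_single H G v h hne⟩).val = [⟨σ v, h'⟩]

end Aut

/-! ### Subgroups and locally finite subgroups of partial groups -/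

/-- A subset `N` is a subgroup of the partial group with data `(D, P, inv)`: it is closed
under inversion, every word with letters in `N` is in the domain `D`, and `P` maps such
words into `N`. -/
def IsSubgroupOf {M : Type*} (D : Set (List M)) (P : List M → M) (inv : M → M)
    (N : Set M) : Prop :=
  (∀ x ∈ N, inv x ∈ N) ∧ ∀ W : List M, (∀ u ∈ W, u ∈ N) → W ∈ D ∧ P W ∈ N

/-- A subgroup `N` of a partial group is locally finite: every finite subset of `N` is
contained in a finite subgroup contained in `N` (i.e. every finitely generated subgroup of the
group `N` is finite). -/
def IsLocFinSubgroupOf {M : Type*} (D : Set (List M)) (P : List M → M) (inv : M → M)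
    (N : Set M) : Prop :=
  IsSubgroupOf D P inv N ∧
    ∀ S : Set M, S ⊆ N → S.Finite →
      ∃ K : Set M, S ⊆ K ∧ K ⊆ N ∧ IsSubgroupOf D P inv K ∧ K.Finite

end PaperPG

namespace PaperPG

/-- The group `ℤ/2`, written multiplicatively: the decorating group of path partial groups. -/
abbrev Z2 : Type := Multiplicative (ZMod 2)

theorem red_of_isRed {ι : Type*} (H : ι → Type*) [∀ i, Group (H i)]
    [DecidableEq ι] [∀ i, DecidableEq (H i)] (l : List (Ltr H)) (h : IsRed H l) :
    red H l = l := by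
  let w : CoprodI.Word H := ⟨l, h.1, h.2⟩
  have hp : listProd H l = CoprodI.Word.prod w := rfl
  have : CoprodI.Word.equiv (listProd H l) = w := by
    rw [hp]
    exact CoprodI.Word.equiv.apply_symm_apply w
  rw [red, this]

theorem isRed_rawInv {ι : Type*} (H : ι → Type*) [∀ i, Group (H i)]
    (l : List (Ltr H)) (h : IsRed H l) : IsRed H (rawInv H l) := by
  constructor
  · intro y hy
    simp only [rawInv, List.mem_reverse, List.mem_map] at hy
    obtain ⟨x, hx, rfl⟩ := hy
    exact inv_ne_one.2 (h.1 x hx)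
  · unfold List.Chain'
    rw [rawInv, List.isChain_reverse, List.isChain_map]
    exact List.IsChain.imp (fun {a b} hab => Ne.symm hab) h.2

theorem head?_rawInv {ι : Type*} (H : ι → Type*) [∀ i, Group (H i)]
    (l : List (Ltr H)) :
    (rawInv H l).head? = l.getLast?.map fun x => (⟨x.1, x.2⁻¹⟩ : Ltr H) := by
  rw [rawInv, List.head?_reverse, List.getLast?_map]

theorem getLast?_rawInv {ι : Type*} (H : ι → Type*) [∀ i, Group (H i)]
    (l : List (Ltr H)) :
    (rawInv H l).getLast? = l.head?.map fun x => (⟨x.1, x.2⁻¹⟩ : Ltr H) := by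
  rw [rawInv, List.getLast?_reverse, List.head?_map]

/-- In the path partial group `P(G)`: if `η = (v₁,…,v_r)` is a nonempty
element with `r ≥ 2`, then `(η, (v₁), η⁻¹) ∉ D(P(G))`; if `r = 1` and `w` is a neighbour of
`v₁`, then `(η, (w), η⁻¹) ∉ D(P(G))`. Consequently, if `G` has no isolated vertices, the only
`η` with `(η, μ, η⁻¹) ∈ D(P(G))` for every `μ` is the empty sequence. -/
theorem statement18 {ι : Type*} [DecidableEq ι] (G : SimpleGraph ι) :
    -- the case `r ≥ 2`, conjugating the one-vertex sequence at the first vertex of `η`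
    (∀ l : List (Ltr (fun _ : ι => Z2)), Mem (fun _ : ι => Z2) G l → 2 ≤ l.length →
      ∀ x₀ ∈ l.head?,
        ¬ InD (fun _ : ι => Z2) G [l, [x₀], rawInv (fun _ : ι => Z2) l]) ∧
    -- the case `r = 1` with `w` a neighbour of `v₁`
    (∀ v w : ι, G.Adj v w → ∀ g : Z2, g ≠ 1 → ∀ h : Z2, h ≠ 1 →
      ¬ InD (fun _ : ι => Z2) G
        [[(⟨v, g⟩ : Ltr (fun _ : ι => Z2))], [(⟨w, h⟩ : Ltr (fun _ : ι => Z2))],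
          rawInv (fun _ : ι => Z2) [(⟨v, g⟩ : Ltr (fun _ : ι => Z2))]]) ∧
    -- consequence: no isolated vertices forces the normalizing element to be empty
    ((∀ v : ι, ∃ w : ι, G.Adj v w) →
      ∀ l : List (Ltr (fun _ : ι => Z2)), Mem (fun _ : ι => Z2) G l →
        (∀ m : List (Ltr (fun _ : ι => Z2)), Mem (fun _ : ι => Z2) G m →
          InD (fun _ : ι => Z2) G [l, m, rawInv (fun _ : ι => Z2) l]) →
        l = []) := by
  classical
  set H : ι → Type := fun _ : ι => Z2 with hH
  have part1 : ∀ l : List (Ltr H), Mem H G l → 2 ≤ l.length →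
      ∀ x₀ ∈ l.head?, ¬ InD H G [l, [x₀], rawInv H l] := by
    intro l hl hlen x₀ hx₀ hInD
    have hx₀l : x₀ ∈ l := List.mem_of_mem_head? hx₀
    have hlne : l ≠ [] := List.ne_nil_of_mem hx₀l
    have hrne : rawInv H l ≠ [] := by
      simp [rawInv, hlne]
    have h3 := hInD.2.2 1 2 (by norm_num) (by simp)
    have hw : (([l, [x₀], rawInv H l].drop 1).take (2 + 1 - 1)).flatten
        = x₀ :: rawInv H l := by simp
    rw [hw] at h3
    -- the word `x₀ :: rawInv H l` is reduced
    have hred : IsRed H (x₀ :: rawInv H l) := by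
      have hri := isRed_rawInv H l hl.1.1
      constructor
      · intro y hy
        rcases List.mem_cons.1 hy with rfl | hy
        · exact hl.1.1.1 _ hx₀l
        · exact hri.1 y hy
      · unfold List.Chain'
        rw [List.isChain_cons]
        refine ⟨?_, hri.2⟩
        intro b hb
        rw [head?_rawInv] at hb
        rcases Option.map_eq_some_iff.1 hb with ⟨c, hc, rfl⟩
        exact hl.1.2 x₀ hx₀ c hc hlen
    rw [red_of_isRed H _ hred] at h3
    -- but it is not cyclically reduced
    have hlast : (x₀ :: rawInv H l).getLast? = some ⟨x₀.1, x₀.2⁻¹⟩ := by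
      rw [show x₀ :: rawInv H l = [x₀] ++ rawInv H l from rfl,
        List.getLast?_append_of_ne_nil _ hrne, getLast?_rawInv, hx₀]
      rfl
    have := h3.2 x₀ rfl ⟨x₀.1, x₀.2⁻¹⟩ hlast (by simp [rawInv]; omega)
    exact this rfl
  have part2 : ∀ v w : ι, G.Adj v w → ∀ g : Z2, g ≠ 1 → ∀ h : Z2, h ≠ 1 →
      ¬ InD H G [[(⟨v, g⟩ : Ltr H)], [(⟨w, h⟩ : Ltr H)],
        rawInv H [(⟨v, g⟩ : Ltr H)]] := by
    intro v w hadj g hg h hh hInD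
    have hvw : v ≠ w := hadj.ne
    have h3 := hInD.2.2 0 2 (by norm_num) (by simp)
    have hw : (([[(⟨v, g⟩ : Ltr H)], [(⟨w, h⟩ : Ltr H)],
        rawInv H [(⟨v, g⟩ : Ltr H)]].drop 0).take (2 + 1 - 0)).flatten
        = [⟨v, g⟩, ⟨w, h⟩, ⟨v, g⁻¹⟩] := by
      simp [rawInv]
    rw [hw] at h3
    have hred : IsRed H [(⟨v, g⟩ : Ltr H), ⟨w, h⟩, ⟨v, g⁻¹⟩] := by
      constructor
      · intro y hy
        simp only [List.mem_cons, List.not_mem_nil, or_false] at hy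
        rcases hy with rfl | rfl | rfl
        · exact hg
        · exact hh
        · exact inv_ne_one.2 hg
      · simp [List.Chain', hvw, hvw.symm]
    rw [red_of_isRed H _ hred] at h3
    exact h3.2 ⟨v, g⟩ rfl ⟨v, g⁻¹⟩ rfl (by norm_num) rfl
  refine ⟨part1, part2, ?_⟩
  intro hni l hl hall
  rcases l with _ | ⟨x, t⟩
  · rfl
  exfalso
  obtain ⟨v, g⟩ := x
  have hg : g ≠ 1 := hl.1.1.1 ⟨v, g⟩ (by simp)
  rcases t with _ | ⟨y, t'⟩
  · obtain ⟨w, hadj⟩ := hni v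
    exact part2 v w hadj g hg g hg (hall [⟨w, g⟩] (mem_single H G w g hg))
  · exact part1 _ hl (by simp) ⟨v, g⟩ rfl
      (hall [⟨v, g⟩] (mem_single H G v g hg))

end PaperPG
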